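/- For all multi-indices k, N ∈ ℕ^n with 0 ≤ k ≤ N componentwise, one has ∏_{r,s=1}^n 1/(q^{1+k_r−k_s} x_r/x_s;q,p)_{N_r−k_r} = V(k) · ∏_{r,s=1}^n (q^{−N_s} x_r/x_s;q,p)_{k_r}/(q x_r/x_s;q,p)_{N_r} · (−1)^{|k|} · q^{|N|·|k| − C(|k|,2) + Σ_{r=1}^n (r−1)k_r}, where C(m,2) = m(m−1)/2. -/

import Mathlib

open Finset

/-- The modified Jacobi theta function `θ(z;p) = ∏_{j≥0} (1 - z p^j)(1 - p^{j+1}/z)`. -/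
noncomputable def theta (p z : ℂ) : ℂ :=
  ∏' j : ℕ, ((1 - z * p ^ j) * (1 - p ^ (j + 1) / z))

/-- The theta shifted factorial `(z;q,p)_k`, defined for all integers `k`:
for `k ≥ 0` it is `∏_{j=0}^{k-1} θ(z q^j;p)`, and for `k < 0` it is
`1/(z q^k;q,p)_{-k} = (∏_{j=0}^{-k-1} θ(z q^{k+j};p))⁻¹`. -/
noncomputable def tpoch (p q z : ℂ) (k : ℤ) : ℂ :=
  if 0 ≤ k then ∏ j ∈ Finset.range k.toNat, theta p (z * q ^ (j : ℤ))
  else (∏ j ∈ Finset.range (-k).toNat, theta p (z * q ^ (k + (j : ℤ))))⁻¹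

/-- The elliptic Vandermonde factor
`V(k) = ∏_{1≤r<s≤n} θ(q^{k_r-k_s} x_r/x_s)/θ(x_r/x_s)`. -/
noncomputable def vdm {n : ℕ} (p q : ℂ) (x : Fin n → ℂ) (k : Fin n → ℕ) : ℂ :=
  ∏ r : Fin n, ∏ s : Fin n,
    if r < s then
      theta p (q ^ ((k r : ℤ) - (k s : ℤ)) * (x r / x s)) / theta p (x r / x s)
    else 1

/-!
Write `z = x_r/x_s`. Splitting
`(qz)_{N_r} = (qz)_{k_r-k_s} (q^{1+k_r-k_s}z)_{N_r-k_r} (q^{1+N_r-k_s}z)_{k_s}`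
turns each factor on the left into three theta shifted factorials. The factors
`(q x_r/x_s)_{k_r-k_s}` for `(r,s)` and `(s,r)` combine, by the reflection `θ(1/z) = -θ(z)/z`,
into the Vandermonde factor `θ(q^{k_r-k_s} z)/θ(z)` times `(-z)^{k_r-k_s} q^{C(k_r-k_s,2)}`;
reflecting `(q^{1+N_s-k_r} x_s/x_r)_{k_r}` gives `(q^{-N_s} x_r/x_s)_{k_r}` up to a monomial.
What remains is to collect the signs, the powers of the `x_r` (which cancel) and the powers of `q`.
-/

section Theta

variable {p : ℂ}

lemma multipliable_one_sub_mul_pow (hp : ‖p‖ < 1) (c : ℂ) :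
    Multipliable fun j : ℕ => 1 - c * p ^ j := by
  simpa [sub_eq_add_neg] using multipliable_one_add_of_summable (f := fun j : ℕ => -(c * p ^ j))
    (by simpa [norm_pow] using (summable_geometric_of_lt_one (norm_nonneg p) hp).mul_left ‖c‖)

lemma theta_eq_mul_tprod (hp : ‖p‖ < 1) (z : ℂ) :
    theta p z = (1 - z) * (∏' j : ℕ, (1 - z * p * p ^ j)) * ∏' j : ℕ, (1 - p / z * p ^ j) := by
  have hsplit : theta p z = (∏' j : ℕ, (1 - z * p ^ j)) * ∏' j : ℕ, (1 - p / z * p ^ j) := by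
    rw [theta, ← (multipliable_one_sub_mul_pow hp z).tprod_mul
      (multipliable_one_sub_mul_pow hp (p / z))]
    congr! 3 with j
    ring
  have hshift : ∀ j : ℕ, 1 - z * p ^ (j + 1) = 1 - z * p * p ^ j := fun j => by ring
  rw [hsplit, tprod_eq_zero_mul'
    (by simpa only [hshift] using multipliable_one_sub_mul_pow hp (z * p))]
  simp only [hshift, pow_zero, mul_one]

lemma theta_inv (hp : ‖p‖ < 1) {z : ℂ} (hz : z ≠ 0) : theta p z⁻¹ = -z⁻¹ * theta p z := by
  rw [theta_eq_mul_tprod hp, theta_eq_mul_tprod hp, div_inv_eq_mul, inv_mul_eq_div,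
    mul_comm p z]
  have : 1 - z⁻¹ = -z⁻¹ * (1 - z) := by field_simp; ring
  rw [this]
  ring

end Theta

section Tpoch

variable {p q : ℂ}

lemma zpow_mul_mul_zpow (hq : q ≠ 0) (e f : ℤ) (w : ℂ) : q ^ e * w * q ^ f = q ^ (e + f) * w := by
  rw [mul_right_comm, ← zpow_add₀ hq]

lemma tpoch_natCast (z : ℂ) (n : ℕ) :
    tpoch p q z n = ∏ j ∈ range n, theta p (z * q ^ (j : ℤ)) := by
  simp [tpoch]

lemma tpoch_zero (z : ℂ) : tpoch p q z 0 = 1 := by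
  simp [tpoch]

lemma tpoch_one (z : ℂ) : tpoch p q z 1 = theta p z := by
  simp [tpoch]

lemma tpoch_zpow_mul_neg_natCast (hq : q ≠ 0) (e : ℤ) (w : ℂ) (n : ℕ) :
    tpoch p q (q ^ e * w) (-n) = (tpoch p q (q ^ (e - n) * w) n)⁻¹ := by
  rcases Nat.eq_zero_or_pos n with rfl | hn
  · simp [tpoch_zero]
  rw [tpoch, if_neg (by omega), neg_neg, Int.toNat_natCast, tpoch_natCast]
  congr 1
  refine prod_congr rfl fun j _ => ?_
  rw [zpow_mul_mul_zpow hq, zpow_mul_mul_zpow hq, sub_eq_add_neg, add_assoc]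

lemma tpoch_zpow_mul_add (hq : q ≠ 0) (e : ℤ) (w : ℂ) (a b : ℕ) :
    tpoch p q (q ^ e * w) (a + b : ℕ) =
      tpoch p q (q ^ e * w) a * tpoch p q (q ^ (e + a) * w) b := by
  rw [tpoch_natCast, prod_range_add]
  simp only [tpoch_natCast, zpow_mul_mul_zpow hq, Nat.cast_add, add_assoc]

lemma tpoch_zpow_mul_ne_zero (hq : q ≠ 0) (e : ℤ) (w : ℂ) (n : ℕ)
    (h : ∀ j : ℕ, j < n → theta p (q ^ (e + j) * w) ≠ 0) : tpoch p q (q ^ e * w) n ≠ 0 := by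
  rw [tpoch_natCast]
  exact prod_ne_zero_iff.mpr fun j hj => by
    rw [zpow_mul_mul_zpow hq]; exact h j (mem_range.mp hj)

lemma theta_mul_tpoch_mul (hq : q ≠ 0) (z : ℂ) (n : ℕ) :
    theta p z * tpoch p q (q * z) n = tpoch p q z n * theta p (q ^ (n : ℤ) * z) := by
  have h := tpoch_zpow_mul_add (p := p) hq 0 z 1 n
  rw [add_comm 1 n, tpoch_zpow_mul_add hq 0 z n 1] at h
  simpa [tpoch_natCast, tpoch_one, eq_comm] using h

lemma tpoch_reflect (hp : ‖p‖ < 1) (hq : q ≠ 0) {a : ℂ} (ha : a ≠ 0) (n : ℕ) :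
    tpoch p q a n = (-a) ^ n * q ^ n.choose 2 * tpoch p q (q ^ (1 - (n : ℤ)) * a⁻¹) n := by
  have hfactor : ∀ j : ℕ,
      theta p (a * q ^ (j : ℤ)) = -a * q ^ j * theta p (a * q ^ (j : ℤ))⁻¹ := fun j => by
    have h := theta_inv hp (inv_ne_zero (mul_ne_zero ha (zpow_ne_zero (j : ℤ) hq)))
    rw [inv_inv] at h
    rw [h, zpow_natCast]
    ring
  have hscalar : ∏ j ∈ range n, -a * q ^ j = (-a) ^ n * q ^ n.choose 2 := by
    rw [prod_mul_distrib, prod_const, card_range, prod_pow_eq_pow_sum, sum_range_id,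
      Nat.choose_two_right]
  have hreflect : ∏ j ∈ range n, theta p (a * q ^ (j : ℤ))⁻¹ =
      ∏ j ∈ range n, theta p (q ^ (1 - (n : ℤ)) * a⁻¹ * q ^ (j : ℤ)) := by
    rw [← prod_range_reflect _ n]
    refine prod_congr rfl fun j hj => ?_
    have hjn : ((n - 1 - j : ℕ) : ℤ) = n - 1 - j := by have := mem_range.mp hj; omega
    rw [zpow_mul_mul_zpow hq, mul_inv, ← zpow_neg, hjn, mul_comm]
    ring_nf
  rw [tpoch_natCast, tpoch_natCast, prod_congr rfl fun j _ => hfactor j, prod_mul_distrib,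
    hscalar, hreflect]

end Tpoch

section Pairing

variable {p q : ℂ}

lemma natCast_choose_two (n : ℕ) : (n.choose 2 : ℤ) = n * (n - 1) / 2 := by
  rcases n with _ | n
  · rfl
  · rw [Nat.choose_two_right, Nat.add_sub_cancel, Int.natCast_ediv]
    push_cast
    ring_nf

lemma tpoch_mul_tpoch_inv_neg_natCast (hp : ‖p‖ < 1) (hq : q ≠ 0) {z : ℂ} (hz : z ≠ 0)
    (hθ : ∀ m : ℤ, theta p (q ^ m * z) ≠ 0) (n : ℕ) :
    tpoch p q (q * z) n * tpoch p q (q * z⁻¹) (-n) =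
      theta p (q ^ (n : ℤ) * z) / theta p z * ((-z) ^ n * q ^ n.choose 2) := by
  have hθ0 : theta p z ≠ 0 := by simpa using hθ 0
  have hT : tpoch p q z n ≠ 0 := by
    simpa using tpoch_zpow_mul_ne_zero (p := p) hq 0 z n fun j _ => hθ _
  have hshift := theta_mul_tpoch_mul (p := p) hq z n
  have hrefl := tpoch_reflect hp hq hz n
  have hR : tpoch p q (q ^ (1 - (n : ℤ)) * z⁻¹) n ≠ 0 := right_ne_zero_of_mul (hrefl ▸ hT)
  rw [show q * z⁻¹ = q ^ (1 : ℤ) * z⁻¹ by rw [zpow_one], tpoch_zpow_mul_neg_natCast hq]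
  have key : tpoch p q (q * z) n = theta p (q ^ (n : ℤ) * z) / theta p z *
      ((-z) ^ n * q ^ n.choose 2) * tpoch p q (q ^ (1 - (n : ℤ)) * z⁻¹) n := by
    rw [div_mul_eq_mul_div, div_mul_eq_mul_div, eq_div_iff hθ0]
    linear_combination hshift + theta p (q ^ (n : ℤ) * z) * hrefl
  rw [key, mul_assoc, mul_inv_cancel₀ hR, mul_one]

lemma tpoch_mul_tpoch_inv_neg (hp : ‖p‖ < 1) (hq : q ≠ 0) {z : ℂ} (hz : z ≠ 0)
    (hθ : ∀ m : ℤ, theta p (q ^ m * z) ≠ 0) (m : ℤ) :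
    tpoch p q (q * z) m * tpoch p q (q * z⁻¹) (-m) =
      theta p (q ^ m * z) / theta p z * ((-z) ^ m * q ^ (m * (m - 1) / 2)) := by
  obtain ⟨n, rfl | rfl⟩ := Int.eq_nat_or_neg m
  · rw [tpoch_mul_tpoch_inv_neg_natCast hp hq hz hθ, ← natCast_choose_two]
    simp only [zpow_natCast]
  -- the case `m = -n` is the case `n` for `z⁻¹`
  have hz' : ∀ m : ℤ, q ^ m * z⁻¹ = (q ^ (-m) * z)⁻¹ := fun m => by
    rw [mul_inv, zpow_neg, inv_inv]
  have hθ' : ∀ m : ℤ, theta p (q ^ m * z⁻¹) ≠ 0 := fun m => by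
    rw [hz', theta_inv hp (mul_ne_zero (zpow_ne_zero _ hq) hz)]
    exact mul_ne_zero (neg_ne_zero.mpr (inv_ne_zero (mul_ne_zero (zpow_ne_zero _ hq) hz))) (hθ _)
  have h := tpoch_mul_tpoch_inv_neg_natCast hp hq (inv_ne_zero hz) hθ' n
  rw [inv_inv, mul_comm] at h
  have hexp : -(n : ℤ) * (-n - 1) / 2 = (n.choose 2 : ℕ) + n := by
    rw [natCast_choose_two, ← Int.add_mul_ediv_right _ _ two_ne_zero]
    ring_nf
  rw [neg_neg, h, hz', theta_inv hp (mul_ne_zero (zpow_ne_zero _ hq) hz), theta_inv hp hz, hexp,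
    zpow_add₀ hq, zpow_neg, zpow_neg]
  simp only [zpow_natCast]
  have hθ0 : theta p z ≠ 0 := by simpa using hθ 0
  rw [← inv_pow (-z), ← neg_inv]
  field_simp

end Pairing

section Splitting

variable {p q : ℂ}

lemma inv_tpoch_zpow_mul_eq (hq : q ≠ 0) (w : ℂ) {a b N : ℕ} (haN : a ≤ N)
    (hw : ∀ m : ℤ, (m ≠ 0 ∨ a < b) → theta p (q ^ m * w) ≠ 0) :
    (tpoch p q (q ^ (1 + (a : ℤ) - b) * w) ((N : ℤ) - a))⁻¹ =
      tpoch p q (q * w) ((a : ℤ) - b) * tpoch p q (q ^ (1 + (N : ℤ) - b) * w) b *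
        (tpoch p q (q * w) N)⁻¹ := by
  obtain ⟨c, rfl⟩ := Nat.exists_eq_add_of_le haN
  rw [show ((a + c : ℕ) : ℤ) - a = c by push_cast; ring,
    show q * w = q ^ (1 : ℤ) * w by rw [zpow_one]]
  rcases le_or_gt b a with hba | hab
  · obtain ⟨d, rfl⟩ := Nat.exists_eq_add_of_le hba
    have key : tpoch p q (q ^ (1 : ℤ) * w) (b + d + c : ℕ) = tpoch p q (q ^ (1 : ℤ) * w) d *
        tpoch p q (q ^ (1 + d : ℤ) * w) c * tpoch p q (q ^ (1 + d + c : ℤ) * w) b := by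
      rw [show b + d + c = d + c + b by ring, tpoch_zpow_mul_add hq, tpoch_zpow_mul_add hq]
      push_cast [add_assoc]
      rfl
    have hA : tpoch p q (q ^ (1 : ℤ) * w) d ≠ 0 :=
      tpoch_zpow_mul_ne_zero hq _ _ _ fun j _ => hw _ (Or.inl (by omega))
    have hC : tpoch p q (q ^ (1 + d + c : ℤ) * w) b ≠ 0 :=
      tpoch_zpow_mul_ne_zero hq _ _ _ fun j _ => hw _ (Or.inl (by omega))
    rw [show 1 + ((b + d : ℕ) : ℤ) - b = 1 + d by push_cast; ring,
      show ((b + d : ℕ) : ℤ) - b = (d : ℕ) by push_cast; ring,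
      show 1 + ((b + d + c : ℕ) : ℤ) - b = 1 + d + c by push_cast; ring, key]
    generalize tpoch p q (q ^ (1 : ℤ) * w) d = A at hA ⊢
    generalize tpoch p q (q ^ (1 + d + c : ℤ) * w) b = C at hC ⊢
    field_simp
  · obtain ⟨d, rfl⟩ := Nat.exists_eq_add_of_lt hab
    have key := tpoch_zpow_mul_add (p := p) hq (-d) w (d + 1) (a + c)
    rw [show d + 1 + (a + c) = c + (a + d + 1) by ring, tpoch_zpow_mul_add hq,
      show -(d : ℤ) + ((d + 1 : ℕ) : ℤ) = 1 by push_cast; ring,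
      show -(d : ℤ) + (c : ℤ) = c - d by ring] at key
    have hC : tpoch p q (q ^ ((c : ℤ) - d) * w) (a + d + 1 : ℕ) ≠ 0 :=
      tpoch_zpow_mul_ne_zero hq _ _ _ fun j _ => hw _ (Or.inr (by omega))
    rw [show 1 + (a : ℤ) - ((a + d + 1 : ℕ) : ℤ) = -d by push_cast; ring,
      show (a : ℤ) - ((a + d + 1 : ℕ) : ℤ) = -((d + 1 : ℕ) : ℤ) by push_cast; ring,
      show 1 + ((a + c : ℕ) : ℤ) - ((a + d + 1 : ℕ) : ℤ) = c - d by push_cast; ring,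
      tpoch_zpow_mul_neg_natCast hq, show (1 : ℤ) - ((d + 1 : ℕ) : ℤ) = -d by push_cast; ring]
    calc _ = tpoch p q (q ^ ((c : ℤ) - d) * w) (a + d + 1 : ℕ) *
          (tpoch p q (q ^ (-d : ℤ) * w) c * tpoch p q (q ^ ((c : ℤ) - d) * w) (a + d + 1 : ℕ))⁻¹ := by
          rw [mul_inv, mul_left_comm, mul_inv_cancel₀ hC, mul_one]
      _ = _ := by rw [key, mul_inv]; ring

end Splitting

section OrderedPairs

@[to_additive]
lemma prod_ite_lt_mul_swap_mul_prod_diag {ι M : Type*} [Fintype ι] [LinearOrder ι]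
    [CommMonoid M] (f : ι → ι → M) :
    (∏ r, ∏ s, if r < s then f r s * f s r else 1) * ∏ r, f r r = ∏ r, ∏ s, f r s := by
  have hsplit : ∀ r s, f r s = (if r < s then f r s else 1) * (if s < r then f r s else 1) *
      (if r = s then f r s else 1) := fun r s => by
    rcases lt_trichotomy r s with h | rfl | h
    · simp [h, h.not_gt, h.ne]
    · simp
    · simp [h, h.not_gt, h.ne']
  conv_rhs => rw [prod_congr rfl fun r _ => prod_congr rfl fun s _ => hsplit r s]
  simp only [ite_mul_one, prod_mul_distrib, prod_ite_eq, mem_univ, if_true]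
  rw [prod_comm (f := fun r s => if s < r then f r s else 1)]

lemma sum_ite_lt_eq_sum_mul {n : ℕ} (v : Fin n → ℤ) :
    ∑ r, ∑ s, (if r < s then v s else 0) = ∑ s : Fin n, (s : ℤ) * v s := by
  rw [sum_comm]
  refine sum_congr rfl fun s _ => ?_
  rw [← sum_filter, filter_gt_eq_Iio, sum_const, Fin.card_Iio, nsmul_eq_mul]

lemma prod_zpow_eq_zpow_sum₀ {ι G₀ : Type*} [CommGroupWithZero G₀] {a : G₀} (ha : a ≠ 0)
    (s : Finset ι) (f : ι → ℤ) : ∏ i ∈ s, a ^ f i = a ^ ∑ i ∈ s, f i := by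
  induction s using Finset.cons_induction with
  | empty => simp
  | cons i s hi ih => rw [prod_cons, sum_cons, ih, zpow_add₀ ha]

end OrderedPairs

section Scalars

variable {n : ℕ}

lemma two_mul_ediv_two_mul_sub_one (m : ℤ) : 2 * (m * (m - 1) / 2) = m * (m - 1) :=
  Int.two_mul_ediv_two_of_even (Int.even_mul_pred_self m)

lemma sum_exponents_eq (N k : Fin n → ℕ) :
    (∑ r, ∑ s, if r < s then ((k r : ℤ) - k s) * ((k r : ℤ) - k s - 1) / 2 else 0) +
        ∑ r, ∑ s, ((1 + (N s : ℤ) - k r) * k r + (k r).choose 2) =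
      ((∑ r, N r : ℕ) : ℤ) * ((∑ r, k r : ℕ) : ℤ) - ((∑ r, k r).choose 2 : ℤ) +
        ∑ r : Fin n, (r : ℤ) * k r := by
  have hchoose : ∀ j : ℕ, 2 * (j.choose 2 : ℤ) = j * (j - 1) := fun j => by
    rw [natCast_choose_two, two_mul_ediv_two_mul_sub_one]
  -- `2 · C(k_r - k_s, 2)` is symmetric in `r, s` up to the term `2 k_s`
  have hpair : ∀ r s : Fin n,
      2 * (if r < s then ((k r : ℤ) - k s) * ((k r : ℤ) - k s - 1) / 2 else 0) =
        (if r < s then ((k r : ℤ) * k r - k r - k r * k s) + ((k s : ℤ) * k s - k s - k s * k r)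
          else 0) + 2 * (if r < s then (k s : ℤ) else 0) := fun r s => by
    split_ifs
    · rw [two_mul_ediv_two_mul_sub_one]; ring
    · simp
  have hsym := sum_ite_lt_add_swap_add_sum_diag
    (fun r s : Fin n => (k r : ℤ) * k r - k r - k r * k s)
  have hlin := sum_ite_lt_eq_sum_mul (fun s : Fin n => (k s : ℤ))
  have htwice : 2 * (∑ r, ∑ s, if r < s then ((k r : ℤ) - k s) * ((k r : ℤ) - k s - 1) / 2 else 0) =
      (∑ r, ∑ s, ((k r : ℤ) * k r - k r - k r * k s)) - ∑ r, ((k r : ℤ) * k r - k r - k r * k r) +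
        2 * ∑ s : Fin n, (s : ℤ) * k s := by
    simp_rw [mul_sum, hpair, sum_add_distrib, ← mul_sum, hlin, ← hsym]
    ring
  apply mul_left_cancel₀ (two_ne_zero' ℤ)
  rw [mul_add, htwice]
  simp only [mul_sum, mul_add, mul_sub, hchoose]
  push_cast
  simp only [add_mul, sub_mul, mul_sub, mul_one, sum_add_distrib, sum_sub_distrib, sum_const,
    card_univ, Fintype.card_fin, nsmul_eq_mul, ← mul_sum, ← sum_mul]
  ring

variable {q : ℂ} {x : Fin n → ℂ}

lemma prod_neg_div_pow_factors (hx : ∀ r, x r ≠ 0) (k : Fin n → ℕ) :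
    (∏ r, ∏ s, if r < s then (-(x r / x s)) ^ ((k r : ℤ) - k s) else 1) *
        ∏ r, ∏ s, (-(x s / x r)) ^ k r = (-1) ^ ∑ r, k r := by
  have hy : ∀ r s, -(x r / x s) * -(x s / x r) = 1 := fun r s => by
    field_simp [hx r, hx s]
  have hpair : ∀ r s, (-(x r / x s)) ^ ((k r : ℤ) - k s) =
      (-(x r / x s)) ^ k r * (-(x s / x r)) ^ k s := fun r s => by
    rw [zpow_sub₀ (left_ne_zero_of_mul_eq_one (hy r s)), zpow_natCast, zpow_natCast,
      div_eq_mul_inv, ← inv_pow, inv_eq_of_mul_eq_one_right (hy r s)]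
  have hswap : (∏ r, ∏ s, if r < s then (-(x r / x s)) ^ ((k r : ℤ) - k s) else 1) *
      (-1) ^ ∑ r, k r = ∏ r, ∏ s, (-(x r / x s)) ^ k r := by
    simp only [hpair]
    rw [← prod_ite_lt_mul_swap_mul_prod_diag (fun r s => (-(x r / x s)) ^ k r),
      ← prod_pow_eq_pow_sum]
    simp [div_self (hx _)]
  have hcancel : (∏ r, ∏ s, (-(x r / x s)) ^ k r) * ∏ r, ∏ s, (-(x s / x r)) ^ k r = 1 := by
    simp [← prod_mul_distrib, ← mul_pow, hy]
  have hsign : (-1 : ℂ) ^ (∑ r, k r) * (-1) ^ (∑ r, k r) = 1 := by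
    rw [← mul_pow, neg_one_mul, neg_neg, one_pow]
  rw [← inv_eq_of_mul_eq_one_right hsign]
  exact eq_inv_of_mul_eq_one_left (by rw [mul_right_comm, hswap, hcancel])

lemma prod_zpow_factors (hq : q ≠ 0) (N k : Fin n → ℕ) :
    (∏ r, ∏ s, if r < s then q ^ (((k r : ℤ) - k s) * ((k r : ℤ) - k s - 1) / 2) else 1) *
        (∏ r, ∏ s, (q ^ (1 + (N s : ℤ) - k r)) ^ k r) * ∏ r, ∏ _s : Fin n, q ^ (k r).choose 2 =
      q ^ (((∑ r, N r : ℕ) : ℤ) * ((∑ r, k r : ℕ) : ℤ) - ((∑ r, k r).choose 2 : ℤ) +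
        ∑ r : Fin n, (r : ℤ) * k r) := by
  have hite : ∀ (r s : Fin n) (e : ℤ), (if r < s then q ^ e else 1) = q ^ (if r < s then e else 0) :=
    fun r s e => by split_ifs <;> simp
  simp only [hite, ← zpow_natCast, ← zpow_mul, prod_zpow_eq_zpow_sum₀ hq, ← zpow_add₀ hq,
    ← sum_exponents_eq, sum_add_distrib, add_assoc]

lemma prod_scalar_factors (hq : q ≠ 0) (hx : ∀ r, x r ≠ 0) (N k : Fin n → ℕ) :
    (∏ r, ∏ s, if r < s then (-(x r / x s)) ^ ((k r : ℤ) - k s) *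
        q ^ (((k r : ℤ) - k s) * ((k r : ℤ) - k s - 1) / 2) else 1) *
        ∏ r, ∏ s, (-(q ^ (1 + (N s : ℤ) - k r) * (x s / x r))) ^ k r * q ^ (k r).choose 2 =
      (-1) ^ (∑ r, k r) * q ^ (((∑ r, N r : ℕ) : ℤ) * ((∑ r, k r : ℕ) : ℤ) -
        ((∑ r, k r).choose 2 : ℤ) + ∑ r : Fin n, (r : ℤ) * k r) := by
  simp only [ite_mul_one, prod_mul_distrib, ← mul_neg, mul_pow]
  rw [← prod_neg_div_pow_factors hx k, ← prod_zpow_factors hq N k]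
  ring

end Scalars

section Products

variable {n : ℕ} {p q : ℂ} {x : Fin n → ℂ}

lemma prod_tpoch_sub_eq_vdm_mul (hp : ‖p‖ < 1) (hq : q ≠ 0) (hx : ∀ r, x r ≠ 0)
    (hX : ∀ r s : Fin n, r ≠ s → ∀ m : ℤ, theta p (q ^ m * (x r / x s)) ≠ 0) (k : Fin n → ℕ) :
    ∏ r, ∏ s, tpoch p q (q * (x r / x s)) ((k r : ℤ) - k s) = vdm p q x k *
      ∏ r, ∏ s, if r < s then (-(x r / x s)) ^ ((k r : ℤ) - k s) *
        q ^ (((k r : ℤ) - k s) * ((k r : ℤ) - k s - 1) / 2) else 1 := by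
  rw [← prod_ite_lt_mul_swap_mul_prod_diag]
  simp only [sub_self, tpoch_zero, prod_const_one, mul_one]
  rw [vdm, ← prod_mul_distrib]
  refine prod_congr rfl fun r _ => ?_
  rw [← prod_mul_distrib]
  refine prod_congr rfl fun s _ => ?_
  split_ifs with h
  · rw [show x s / x r = (x r / x s)⁻¹ from (inv_div _ _).symm,
      show (k s : ℤ) - k r = -((k r : ℤ) - k s) by ring,
      tpoch_mul_tpoch_inv_neg hp hq (div_ne_zero (hx r) (hx s)) (hX r s h.ne)]
  · rw [mul_one]

lemma prod_tpoch_eq_mul_prod_tpoch (hp : ‖p‖ < 1) (hq : q ≠ 0) (hx : ∀ r, x r ≠ 0)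
    (N k : Fin n → ℕ) :
    ∏ r, ∏ s, tpoch p q (q ^ (1 + (N r : ℤ) - k s) * (x r / x s)) (k s) =
      (∏ r, ∏ s, (-(q ^ (1 + (N s : ℤ) - k r) * (x s / x r))) ^ k r * q ^ (k r).choose 2) *
        ∏ r, ∏ s, tpoch p q (q ^ (-(N s : ℤ)) * (x r / x s)) (k r) := by
  rw [prod_comm, ← prod_mul_distrib]
  refine prod_congr rfl fun r _ => ?_
  rw [← prod_mul_distrib]
  refine prod_congr rfl fun s _ => ?_
  rw [tpoch_reflect hp hq (mul_ne_zero (zpow_ne_zero _ hq) (div_ne_zero (hx s) (hx r))), mul_inv,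
    inv_div, ← mul_assoc, ← zpow_neg, ← zpow_add₀ hq,
    show 1 - (k r : ℤ) + -(1 + N s - k r) = -N s by ring]

end Products

theorem statement1 {n : ℕ} (p q : ℂ) (x : Fin n → ℂ)
    (hp : ‖p‖ < 1) (hq : q ≠ 0) (hx : ∀ r, x r ≠ 0)
    (hX : ∀ r s : Fin n, ∀ m : ℤ, (r ≠ s ∨ m ≠ 0) → theta p (q ^ m * (x r / x s)) ≠ 0)
    (N k : Fin n → ℕ) (hkN : ∀ r, k r ≤ N r) :
    (∏ r : Fin n, ∏ s : Fin n,
        (tpoch p q (q ^ (1 + (k r : ℤ) - (k s : ℤ)) * (x r / x s)) ((N r : ℤ) - (k r : ℤ)))⁻¹)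
      = vdm p q x k
        * (∏ r : Fin n, ∏ s : Fin n,
            tpoch p q (q ^ (-(N s : ℤ)) * (x r / x s)) (k r)
              / tpoch p q (q * (x r / x s)) (N r))
        * (-1 : ℂ) ^ (∑ r, k r)
        * q ^ (((∑ r, N r : ℕ) : ℤ) * ((∑ r, k r : ℕ) : ℤ)
              - (Nat.choose (∑ r, k r) 2 : ℤ)
              + (∑ r : Fin n, (r : ℤ) * (k r : ℤ))) := by
  have hsplit : ∀ r s, (tpoch p q (q ^ (1 + (k r : ℤ) - k s) * (x r / x s)) ((N r : ℤ) - k r))⁻¹ =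
      tpoch p q (q * (x r / x s)) ((k r : ℤ) - k s) *
        tpoch p q (q ^ (1 + (N r : ℤ) - k s) * (x r / x s)) (k s) *
          (tpoch p q (q * (x r / x s)) (N r))⁻¹ := fun r s =>
    inv_tpoch_zpow_mul_eq hq _ (hkN r) fun m hm => hX r s m <| by
      rcases eq_or_ne r s with rfl | hrs
      · simpa using hm
      · exact Or.inl hrs
  rw [prod_congr rfl fun r _ => prod_congr rfl fun s _ => hsplit r s]
  simp only [prod_mul_distrib]
  rw [prod_tpoch_sub_eq_vdm_mul hp hq hx (fun r s h m => hX r s m (Or.inl h)) k,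
    prod_tpoch_eq_mul_prod_tpoch hp hq hx N k]
  simp only [prod_div_distrib, prod_inv_distrib]
  linear_combination (vdm p q x k * (∏ r, ∏ s, tpoch p q (q ^ (-(N s : ℤ)) * (x r / x s)) (k r)) /
    ∏ r, ∏ s, tpoch p q (q * (x r / x s)) (N r)) * prod_scalar_factors hq hx N k
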